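/- Let n ≥ 5 and let p(s) = s^n + α1·s^{n-1} + ... + αn be a monic real polynomial, with the convention αk = 0 for k > n. If α2² - 4·α4 ≤ 0 and α7 - α1·α6 ≥ 0, then p is Hurwitz unstable, i.e., p has a complex root with nonnegative real part. -/

import Mathlib

/-!
A monic real polynomial whose roots all lie in the open left half-plane is a product of factors
`X + l` and `X² + bX + c` with `l, b, c > 0`. On the reversal `∑ αₖ Xᵏ`, multiplication by such a
factor preserves `αₖ > 0` for `k ≤ n` and `α₁ α₂ₖ > α₂ₖ₊₁` for `2 ≤ 2k ≤ n`; for `n ≥ 6` the case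
`k = 3` contradicts `α₇ ≥ α₁ α₆`. For `n = 5` the polynomial is
`(X² + b₁X + c₁)(X² + b₂X + c₂)(X + l)`, and then `α₂² - 4α₄` is a square plus `b₁b₂` times a
positive quantity.
-/

open Polynomial

namespace Polynomial

variable {R : Type*}

section Semiring

variable [Semiring R]

theorem reverse_one : (1 : R[X]).reverse = 1 := by
  rw [← C_1, reverse_C]

theorem reverse_X_add_C (r : R) : (X + C r).reverse = 1 + C r * X := by
  nontriviality R
  have hX : (X : R[X]).reverse = 1 := by simpa [reverse_one] using reverse_mul_X (1 : R[X])
  simp [hX]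

theorem reverse_X_sq_add_C_mul_X_add_C (a b : R) :
    (X ^ 2 + C a * X + C b).reverse = 1 + C a * X + C b * X ^ 2 := by
  have h : (X ^ 2 + C a * X : R[X]) = (X + C a) * X := by rw [add_mul, sq]
  rw [reverse_add_C, h, reverse_mul_X, reverse_X_add_C]
  nontriviality R
  rw [(isMonicOfDegree_X_add_one a).mul (isMonicOfDegree_X R) |>.natDegree_eq]

theorem coeff_X_pow_add_sum (a : ℕ → R) {n k : ℕ} (hk₁ : 1 ≤ k) (hk : k ≤ n) :
    (X ^ n + ∑ i ∈ Finset.range n, C (a (i + 1)) * X ^ (n - 1 - i)).coeff (n - k) = a k := by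
  rw [coeff_add, coeff_X_pow, if_neg (by omega), zero_add, finsetSum_coeff,
    Finset.sum_eq_single (k - 1)]
  · rw [coeff_C_mul_X_pow, if_pos (by omega), Nat.sub_add_cancel hk₁]
  · intro i hi hik
    rw [Finset.mem_range] at hi
    rw [coeff_C_mul_X_pow, if_neg (by omega)]
  · intro hk'
    exact absurd (Finset.mem_range.mpr (by omega)) hk'

theorem isMonicOfDegree_X_pow_add_sum [Nontrivial R] (a : ℕ → R) {n : ℕ} (hn : 0 < n) :
    IsMonicOfDegree (X ^ n + ∑ i ∈ Finset.range n, C (a (i + 1)) * X ^ (n - 1 - i)) n := by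
  refine (isMonicOfDegree_X_pow R n).add_right ?_
  refine (natDegree_sum_le_of_forall_le _ _ fun i _ => ?_).trans_lt (Nat.sub_one_lt_of_lt hn)
  exact (natDegree_C_mul_X_pow_le _ _).trans (by omega)

theorem coeff_reverse_X_pow_add_sum [Nontrivial R] {a : ℕ → R} {n : ℕ} (hn : 0 < n)
    (ha : ∀ k, n < k → a k = 0) {k : ℕ} (hk : 1 ≤ k) :
    (X ^ n + ∑ i ∈ Finset.range n, C (a (i + 1)) * X ^ (n - 1 - i)).reverse.coeff k = a k := by
  have hp := isMonicOfDegree_X_pow_add_sum a hn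
  rw [coeff_reverse, hp.natDegree_eq]
  rcases le_or_gt k n with hkn | hkn
  · rw [revAt_le hkn, coeff_X_pow_add_sum a hk hkn]
  · rw [revAt_eq_self_of_lt hkn, ha k hkn,
      coeff_eq_zero_of_natDegree_lt (by rwa [hp.natDegree_eq])]

end Semiring

section CommSemiring

variable [CommSemiring R]

theorem coeff_mul_one_add_C_mul_X_succ (p : R[X]) (a : R) (k : ℕ) :
    (p * (1 + C a * X)).coeff (k + 1) = p.coeff (k + 1) + a * p.coeff k := by
  rw [mul_add, mul_one, coeff_add, mul_left_comm, coeff_C_mul, coeff_mul_X]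

theorem coeff_mul_one_add_C_mul_X_add_C_mul_X_sq_one (p : R[X]) (a b : R) :
    (p * (1 + C a * X + C b * X ^ 2)).coeff 1 = p.coeff 1 + a * p.coeff 0 := by
  rw [mul_add, coeff_add, ← coeff_mul_one_add_C_mul_X_succ, mul_left_comm, coeff_C_mul,
    coeff_mul_X_pow', if_neg (by omega), mul_zero, add_zero]

theorem coeff_mul_one_add_C_mul_X_add_C_mul_X_sq_add_two (p : R[X]) (a b : R) (k : ℕ) :
    (p * (1 + C a * X + C b * X ^ 2)).coeff (k + 2) =
      p.coeff (k + 2) + a * p.coeff (k + 1) + b * p.coeff k := by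
  rw [mul_add, coeff_add, coeff_mul_one_add_C_mul_X_succ, mul_left_comm, coeff_C_mul,
    coeff_mul_X_pow]

end CommSemiring

end Polynomial

def IsHurwitzStable (P : ℝ[X]) : Prop :=
  ∀ z : ℂ, aeval z P = 0 → z.re < 0

namespace IsHurwitzStable

variable {P : ℝ[X]}

theorem of_dvd (hP : IsHurwitzStable P) {Q : ℝ[X]} (hQ : Q ∣ P) : IsHurwitzStable Q := by
  obtain ⟨F, rfl⟩ := hQ
  exact fun z hz => hP z (by rw [map_mul, hz, zero_mul])

theorem pos_of_X_add_C {l : ℝ} (h : IsHurwitzStable (X + C l)) : 0 < l := by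
  simpa using h (-l) (by simp)

theorem pos_of_X_sq_add_C_mul_X_add_C {b c : ℝ} (h : IsHurwitzStable (X ^ 2 + C b * X + C c)) :
    0 < b ∧ 0 < c := by
  obtain ⟨s, hs⟩ := IsAlgClosed.exists_pow_nat_eq ((b : ℂ) ^ 2 - 4 * c) two_pos
  have hroot (z : ℂ) : aeval z (X ^ 2 + C b * X + C c) = z ^ 2 + b * z + c := by simp
  have hz : (-b + s.re) / 2 < 0 := by
    simpa using h ((-b + s) / 2) (by rw [hroot]; linear_combination hs / 4)
  have hw : (-b - s.re) / 2 < 0 := by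
    simpa using h ((-b - s) / 2) (by rw [hroot]; linear_combination hs / 4)
  have hre : s.re ^ 2 - s.im ^ 2 = b ^ 2 - 4 * c := by
    simpa [sq] using congrArg Complex.re hs
  -- `b > |Re s|` from the two roots, and `4c = b² - (Re s)² + (Im s)²`
  constructor <;> nlinarith

theorem induction_on {motive : ℝ[X] → Prop} (hP : IsHurwitzStable P) (hmonic : P.Monic)
    (one : motive 1)
    (mul_linear : ∀ Q l, Q.Monic → 0 < l → motive Q → motive (Q * (X + C l)))
    (mul_quadratic : ∀ Q b c, Q.Monic → 0 < b → 0 < c → motive Q →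
      motive (Q * (X ^ 2 + C b * X + C c))) :
    motive P := by
  induction hd : P.natDegree using Nat.strong_induction_on generalizing P with
  | _ n ih =>
  cases n with
  | zero => rwa [isMonicOfDegree_zero_iff.mp ⟨hd, hmonic⟩]
  | succ n =>
    obtain ⟨F, Q, hF | hF, rfl⟩ := IsMonicOfDegree.eq_isMonicOfDegree_one_or_two_mul ⟨hd, hmonic⟩
    all_goals
      have hQ : Q.Monic := hF.monic.of_mul_monic_left hmonic
      have hdeg := hF.monic.natDegree_mul hQ
      have ihQ := ih Q.natDegree (by rw [← hd, hdeg, hF.natDegree_eq]; omega)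
        (hP.of_dvd (dvd_mul_left Q F)) hQ rfl
      have hFs := hP.of_dvd (dvd_mul_right F Q)
      rw [mul_comm]
    · obtain ⟨l, rfl⟩ := isMonicOfDegree_one_iff.mp hF
      exact mul_linear Q l hQ hFs.pos_of_X_add_C ihQ
    · obtain ⟨b, c, rfl⟩ := isMonicOfDegree_two_iff.mp hF
      exact mul_quadratic Q b c hQ hFs.pos_of_X_sq_add_C_mul_X_add_C.1
        hFs.pos_of_X_sq_add_C_mul_X_add_C.2 ihQ

theorem exists_eq_of_isMonicOfDegree_five (hP : IsHurwitzStable P) (h5 : IsMonicOfDegree P 5) :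
    ∃ b₁ c₁ b₂ c₂ l : ℝ, 0 < b₁ ∧ 0 < c₁ ∧ 0 < b₂ ∧ 0 < c₂ ∧ 0 < l ∧
      P = (X ^ 2 + C b₁ * X + C c₁) * (X ^ 2 + C b₂ * X + C c₂) * (X + C l) := by
  obtain ⟨F₁, G, hF₁, hG, rfl⟩ := h5.eq_isMonicOfDegree_two_mul_isMonicOfDegree
  obtain ⟨F₂, F₃, hF₂, hF₃, rfl⟩ := hG.eq_isMonicOfDegree_two_mul_isMonicOfDegree
  obtain ⟨b₁, c₁, rfl⟩ := isMonicOfDegree_two_iff.mp hF₁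
  obtain ⟨b₂, c₂, rfl⟩ := isMonicOfDegree_two_iff.mp hF₂
  obtain ⟨l, rfl⟩ := isMonicOfDegree_one_iff.mp hF₃
  obtain ⟨hb₁, hc₁⟩ := (hP.of_dvd (dvd_mul_right _ _)).pos_of_X_sq_add_C_mul_X_add_C
  obtain ⟨hb₂, hc₂⟩ :=
    (hP.of_dvd ((dvd_mul_right _ _).mul_left _)).pos_of_X_sq_add_C_mul_X_add_C
  have hl := (hP.of_dvd ((dvd_mul_left _ _).mul_left _)).pos_of_X_add_C
  exact ⟨b₁, c₁, b₂, c₂, l, hb₁, hc₁, hb₂, hc₂, hl, (mul_assoc _ _ _).symm⟩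

end IsHurwitzStable

/-- `p` stands for the reversal `∑ αₖ Xᵏ` of a monic polynomial of degree `n`. -/
structure HurwitzCoeffBounds (p : ℝ[X]) (n : ℕ) : Prop where
  coeff_zero : p.coeff 0 = 1
  coeff_pos : ∀ k ≤ n, 0 < p.coeff k
  coeff_eq_zero : ∀ k, n < k → p.coeff k = 0
  coeff_odd_lt : ∀ k, 2 * k + 2 ≤ n → p.coeff (2 * k + 3) < p.coeff 1 * p.coeff (2 * k + 2)

namespace HurwitzCoeffBounds

variable {p : ℝ[X]} {n : ℕ}

theorem coeff_nonneg (h : HurwitzCoeffBounds p n) (k : ℕ) : 0 ≤ p.coeff k := by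
  rcases le_or_gt k n with hk | hk
  · exact (h.coeff_pos k hk).le
  · exact (h.coeff_eq_zero k hk).ge

theorem coeff_odd_le (h : HurwitzCoeffBounds p n) (k : ℕ) :
    p.coeff (2 * k + 1) ≤ p.coeff 1 * p.coeff (2 * k) := by
  rcases k with _ | k
  · simp [h.coeff_zero]
  rcases le_or_gt (2 * k + 2) n with hk | hk
  · exact (h.coeff_odd_lt k hk).le
  · rw [h.coeff_eq_zero _ (by omega)]
    exact mul_nonneg (h.coeff_nonneg 1) (h.coeff_nonneg _)

theorem one : HurwitzCoeffBounds 1 0 where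
  coeff_zero := coeff_one_zero
  coeff_pos k hk := by simp [Nat.le_zero.mp hk]
  coeff_eq_zero k hk := coeff_one.trans (if_neg (by omega))
  coeff_odd_lt k hk := by omega

theorem mul_linear (h : HurwitzCoeffBounds p n) {l : ℝ} (hl : 0 < l) :
    HurwitzCoeffBounds (p * (1 + C l * X)) (n + 1) where
  coeff_zero := by simp [mul_coeff_zero, h.coeff_zero]
  coeff_pos k hk := by
    rcases k with _ | k
    · simp [mul_coeff_zero, h.coeff_zero]
    · rw [coeff_mul_one_add_C_mul_X_succ]
      exact add_pos_of_nonneg_of_pos (h.coeff_nonneg _) (mul_pos hl (h.coeff_pos k (by omega)))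
  coeff_eq_zero k hk := by
    obtain ⟨k, rfl⟩ : ∃ j, k = j + 1 := ⟨k - 1, by omega⟩
    rw [coeff_mul_one_add_C_mul_X_succ, h.coeff_eq_zero _ (by omega),
      h.coeff_eq_zero _ (by omega), mul_zero, add_zero]
  coeff_odd_lt k hk := by
    have hcoeff_one : (p * (1 + C l * X)).coeff 1 = p.coeff 1 + l := by
      simpa [h.coeff_zero] using coeff_mul_one_add_C_mul_X_succ p l 0
    have hodd : p.coeff (2 * k + 3) ≤ p.coeff 1 * p.coeff (2 * k + 2) := h.coeff_odd_le (k + 1)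
    have hpos := h.coeff_pos (2 * k + 1) (by omega)
    have h1 := h.coeff_nonneg 1
    rw [hcoeff_one, coeff_mul_one_add_C_mul_X_succ, coeff_mul_one_add_C_mul_X_succ]
    -- the new gap is the old one plus `l (α₁ + l) α₂ₖ₊₁`
    nlinarith [mul_pos (mul_pos hl hl) hpos, mul_nonneg (mul_nonneg hl.le h1) hpos.le]

theorem mul_quadratic (h : HurwitzCoeffBounds p n) {b c : ℝ} (hb : 0 < b) (hc : 0 < c) :
    HurwitzCoeffBounds (p * (1 + C b * X + C c * X ^ 2)) (n + 2) where
  coeff_zero := by simp [mul_coeff_zero, h.coeff_zero]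
  coeff_pos k hk := by
    match k with
    | 0 => simp [mul_coeff_zero, h.coeff_zero]
    | 1 =>
      rw [coeff_mul_one_add_C_mul_X_add_C_mul_X_sq_one, h.coeff_zero]
      linarith [h.coeff_nonneg 1]
    | k + 2 =>
      rw [coeff_mul_one_add_C_mul_X_add_C_mul_X_sq_add_two]
      have := mul_pos hc (h.coeff_pos k (by omega))
      nlinarith [h.coeff_nonneg (k + 2), mul_nonneg hb.le (h.coeff_nonneg (k + 1))]
  coeff_eq_zero k hk := by
    obtain ⟨k, rfl⟩ : ∃ j, k = j + 2 := ⟨k - 2, by omega⟩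
    rw [coeff_mul_one_add_C_mul_X_add_C_mul_X_sq_add_two, h.coeff_eq_zero _ (by omega),
      h.coeff_eq_zero _ (by omega), h.coeff_eq_zero _ (by omega)]
    ring
  coeff_odd_lt k hk := by
    have hodd₀ : p.coeff (2 * k + 1) ≤ p.coeff 1 * p.coeff (2 * k) := h.coeff_odd_le k
    have hodd₁ : p.coeff (2 * k + 3) ≤ p.coeff 1 * p.coeff (2 * k + 2) := h.coeff_odd_le (k + 1)
    have hpos := h.coeff_pos (2 * k) (by omega)
    have h1 := h.coeff_nonneg 1
    have h2k1 := h.coeff_nonneg (2 * k + 1)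
    rw [show 2 * k + 3 = 2 * k + 1 + 2 by rfl, coeff_mul_one_add_C_mul_X_add_C_mul_X_sq_add_two,
      coeff_mul_one_add_C_mul_X_add_C_mul_X_sq_add_two,
      coeff_mul_one_add_C_mul_X_add_C_mul_X_sq_one, h.coeff_zero]
    -- the new gap is `Dₖ₊₁ + c Dₖ + b (α₁ + b) α₂ₖ₊₁ + b c α₂ₖ` with `Dⱼ = α₁ α₂ⱼ - α₂ⱼ₊₁`
    nlinarith [mul_pos (mul_pos hb hc) hpos, mul_nonneg hc.le (sub_nonneg.mpr hodd₀),
      mul_nonneg (mul_nonneg hb.le h1) h2k1, mul_nonneg (mul_nonneg hb.le hb.le) h2k1]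

end HurwitzCoeffBounds

theorem IsHurwitzStable.hurwitzCoeffBounds_reverse {P : ℝ[X]} (hP : IsHurwitzStable P)
    (hmonic : P.Monic) : HurwitzCoeffBounds P.reverse P.natDegree := by
  refine hP.induction_on (motive := fun Q => HurwitzCoeffBounds Q.reverse Q.natDegree) hmonic
    (by simpa [reverse_one] using HurwitzCoeffBounds.one) ?_ ?_
  · intro Q l hQ hl hQb
    rw [reverse_mul_of_domain, reverse_X_add_C, hQ.natDegree_mul (monic_X_add_C l),
      natDegree_X_add_C]
    exact hQb.mul_linear hl
  · intro Q b c hQ hb hc hQb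
    rw [reverse_mul_of_domain, reverse_X_sq_add_C_mul_X_add_C,
      hQ.natDegree_mul (isMonicOfDegree_add_add_two b c).monic,
      (isMonicOfDegree_add_add_two b c).natDegree_eq]
    exact hQb.mul_quadratic hb hc

theorem four_mul_coeff_four_lt_coeff_two_sq {b₁ c₁ b₂ c₂ l : ℝ} (hb₁ : 0 < b₁) (hb₂ : 0 < b₂)
    (hc₁ : 0 ≤ c₁) (hc₂ : 0 ≤ c₂) (hl : 0 ≤ l) :
    4 * ((1 + C b₁ * X + C c₁ * X ^ 2) * (1 + C b₂ * X + C c₂ * X ^ 2) * (1 + C l * X)).coeff 4 <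
      ((1 + C b₁ * X + C c₁ * X ^ 2) * (1 + C b₂ * X + C c₂ * X ^ 2) *
        (1 + C l * X)).coeff 2 ^ 2 := by
  set p := (1 + C b₁ * X + C c₁ * X ^ 2) * (1 + C b₂ * X + C c₂ * X ^ 2) * (1 + C l * X)
  have h2 : p.coeff 2 = c₁ + c₂ + b₁ * b₂ + l * (b₁ + b₂) := by
    simp [p, coeff_mul_one_add_C_mul_X_succ, coeff_mul_one_add_C_mul_X_add_C_mul_X_sq_add_two,
      coeff_mul_one_add_C_mul_X_add_C_mul_X_sq_one, coeff_one, coeff_X, coeff_X_pow]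
    ring
  have h4 : p.coeff 4 = c₁ * c₂ + l * (b₁ * c₂ + b₂ * c₁) := by
    simp [p, coeff_mul_one_add_C_mul_X_succ, coeff_mul_one_add_C_mul_X_add_C_mul_X_sq_add_two,
      coeff_one, coeff_X_pow]
    ring
  have hrest : 0 < b₁ * b₂ * (b₁ * b₂ + 2 * (c₁ + c₂) + 4 * l ^ 2 + 2 * l * (b₁ + b₂)) := by
    positivity
  rw [h2, h4]
  -- `α₂² - 4α₄ = (c₁ - c₂ + l (b₁ - b₂))² + b₁b₂ (b₁b₂ + 2(c₁ + c₂) + 4l² + 2l(b₁ + b₂))`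
  nlinarith [sq_nonneg (c₁ - c₂ + l * (b₁ - b₂))]

theorem IsHurwitzStable.four_mul_reverse_coeff_four_lt_sq {P : ℝ[X]} (hP : IsHurwitzStable P)
    (h5 : IsMonicOfDegree P 5) : 4 * P.reverse.coeff 4 < P.reverse.coeff 2 ^ 2 := by
  obtain ⟨b₁, c₁, b₂, c₂, l, hb₁, hc₁, hb₂, hc₂, hl, rfl⟩ := hP.exists_eq_of_isMonicOfDegree_five h5
  simp only [reverse_mul_of_domain, reverse_X_sq_add_C_mul_X_add_C, reverse_X_add_C]
  exact four_mul_coeff_four_lt_coeff_two_sq hb₁ hb₂ hc₁.le hc₂.le hl.le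

theorem unstable_of_discr_ineq (n : ℕ) (hn : 5 ≤ n) (α : ℕ → ℝ)
    (hconv : ∀ k, n < k → α k = 0)
    (h24 : α 2 ^ 2 - 4 * α 4 ≤ 0) (h7 : 0 ≤ α 7 - α 1 * α 6) :
    ∃ z : ℂ, aeval z (X ^ n + ∑ i ∈ Finset.range n, C (α (i + 1)) * X ^ (n - 1 - i)) = 0
      ∧ 0 ≤ z.re := by
  set p : ℝ[X] := X ^ n + ∑ i ∈ Finset.range n, C (α (i + 1)) * X ^ (n - 1 - i)
  have hp : IsMonicOfDegree p n := isMonicOfDegree_X_pow_add_sum α (by omega)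
  have hα : ∀ k, 1 ≤ k → p.reverse.coeff k = α k :=
    fun k hk => coeff_reverse_X_pow_add_sum (by omega) hconv hk
  by_contra! hstable
  change IsHurwitzStable p at hstable
  rcases hn.eq_or_lt with rfl | hn6
  · have := hstable.four_mul_reverse_coeff_four_lt_sq hp
    rw [hα 2 (by norm_num), hα 4 (by norm_num)] at this
    linarith
  · have := (hstable.hurwitzCoeffBounds_reverse hp.monic).coeff_odd_lt 2
      (by rw [hp.natDegree_eq]; omega)
    rw [hα 1 le_rfl, hα 6 (by norm_num), hα 7 (by norm_num)] at this
    linarith
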